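/- Let G be a finite metahamiltonian p-group and x, g ∈ G with [x, x^g] ≠ 1. Then [x, x^g, x] = 1 and [x, x^g]^p = 1. -/

import Mathlib

/-!
Put `y = x^g` and `K = ⟨x, y⟩`. A non-abelian subgroup of `K` containing `x` or `y` is normal
in `G`, hence contains both, hence is `K`; so every maximal subgroup of `K` through `x` or through
`y` is abelian. Such maximal subgroups exist because `[x, y] ≠ 1` makes `K` non-cyclic, and each
has index `p` with cyclic quotient. A maximal subgroup `A ∋ x` thus contains `[x, y]`, so
`[x, y]` commutes with `x`; a maximal subgroup `B ∋ y` contains `x ^ p`, so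
`[x, y] ^ p = [x ^ p, y] = 1`.
-/

open Subgroup

open scoped commutatorElement

theorem commutatorElement_pow_left_of_commute {G : Type*} [Group G] {x y : G}
    (h : Commute ⁅x, y⁆ x) (n : ℕ) : ⁅x ^ n, y⁆ = ⁅x, y⁆ ^ n := by
  induction n with
  | zero => simp
  | succ n ih =>
    calc ⁅x ^ (n + 1), y⁆ = x * ⁅x ^ n, y⁆ * x⁻¹ * ⁅x, y⁆ := by
          simp only [commutatorElement_def, pow_succ']
          group
      _ = ⁅x, y⁆ ^ n * ⁅x, y⁆ := by rw [ih, (h.symm.pow_right n).eq, mul_inv_cancel_right]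
      _ = ⁅x, y⁆ ^ (n + 1) := (pow_succ _ _).symm

theorem exists_isCoatom_mem_of_commutatorElement_ne_one {G : Type*} [Group G] [Finite G]
    {a b : G} (h : ⁅a, b⁆ ≠ 1) : ∃ M : Subgroup G, IsCoatom M ∧ a ∈ M := by
  have hcyc : zpowers a ≠ ⊤ := fun htop => h <| by
    obtain ⟨n, rfl⟩ := mem_zpowers_iff.mp (htop ▸ mem_top b)
    exact commutatorElement_eq_one_iff_commute.mpr ((Commute.refl a).zpow_right n)
  obtain ⟨M, hM, hle⟩ := (eq_top_or_exists_le_coatom (zpowers a)).resolve_left hcyc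
  exact ⟨M, hM, hle (mem_zpowers a)⟩

namespace IsPGroup

variable {p : ℕ} [Fact p.Prime] {K : Type*} [Group K] [Finite K]

theorem normal_of_isCoatom (hK : IsPGroup p K) {M : Subgroup K} (hM : IsCoatom M) : M.Normal :=
  have := hK.isNilpotent
  Group.normalizerCondition_of_isNilpotent.normal_of_coatom M hM

theorem card_quotient_of_isCoatom (hK : IsPGroup p K) {M : Subgroup K} [M.Normal]
    (hM : IsCoatom M) : Nat.card (K ⧸ M) = p := by
  have : IsSimpleOrder (Subgroup (K ⧸ M)) :=
    (OrderIso.isSimpleOrder_iff (β := Set.Ici M) (QuotientGroup.comapMk'OrderIso M)).mpr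
      (Set.isSimpleOrder_Ici_iff_isCoatom.mpr hM)
  have : Nontrivial (K ⧸ M) := QuotientGroup.nontrivial_iff.mpr hM.1
  have : IsSimpleGroup (K ⧸ M) := ⟨fun H _ => eq_bot_or_eq_top H⟩
  have := (hK.to_quotient M).isNilpotent
  have hprime : (Nat.card (K ⧸ M)).Prime := IsSimpleGroup.prime_card
  rcases (hK.to_quotient M).card_eq_or_dvd with h | h
  · exact absurd h hprime.ne_one
  · exact ((Nat.prime_dvd_prime_iff_eq Fact.out hprime).mp h).symm

theorem commutatorElement_mem_of_isCoatom (hK : IsPGroup p K) {M : Subgroup K}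
    (hM : IsCoatom M) (a b : K) : ⁅a, b⁆ ∈ M := by
  have := hK.normal_of_isCoatom hM
  have := isCyclic_of_prime_card (hK.card_quotient_of_isCoatom hM)
  rw [← QuotientGroup.eq_one_iff, ← QuotientGroup.mk'_apply, map_commutatorElement,
    commutatorElement_eq_one_iff_mul_comm]
  exact isMulCommutative_iff.mp inferInstance _ _

theorem pow_mem_of_isCoatom (hK : IsPGroup p K) {M : Subgroup K} (hM : IsCoatom M) (a : K) :
    a ^ p ∈ M := by
  have := hK.normal_of_isCoatom hM
  rw [← QuotientGroup.eq_one_iff, QuotientGroup.mk_pow, ← hK.card_quotient_of_isCoatom hM]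
  exact pow_card_eq_one'

theorem commutatorElement_commutatorElement_eq_one_and_pow_eq_one (hK : IsPGroup p K)
    {a b : K} (hab : ⁅a, b⁆ ≠ 1)
    (ha : ∀ M : Subgroup K, IsCoatom M → a ∈ M → IsMulCommutative M)
    (hb : ∀ M : Subgroup K, IsCoatom M → b ∈ M → IsMulCommutative M) :
    ⁅⁅a, b⁆, a⁆ = 1 ∧ ⁅a, b⁆ ^ p = 1 := by
  obtain ⟨A, hA, haA⟩ := exists_isCoatom_mem_of_commutatorElement_ne_one hab
  obtain ⟨B, hB, hbB⟩ := exists_isCoatom_mem_of_commutatorElement_ne_one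
    (by rwa [← commutatorElement_inv, inv_ne_one] : ⁅b, a⁆ ≠ 1)
  have := ha A hA haA
  have := hb B hB hbB
  have hc : Commute ⁅a, b⁆ a :=
    setLike_mul_comm (hK.commutatorElement_mem_of_isCoatom hA a b) haA
  refine ⟨commutatorElement_eq_one_iff_commute.mpr hc, ?_⟩
  rw [← commutatorElement_pow_left_of_commute hc, commutatorElement_eq_one_iff_mul_comm]
  exact setLike_mul_comm (hK.pow_mem_of_isCoatom hB a) hbB

end IsPGroup

theorem isMulCommutative_of_ne_top_of_mem {G : Type*} [Group G]
    (hmh : ∀ H : Subgroup G, ¬IsMulCommutative H → H.Normal) {K : Subgroup G} {a b : K}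
    (hK : closure {a, b} = ⊤) (hab : IsConj (a : G) b) {M : Subgroup K} (hM : M ≠ ⊤)
    (ha : a ∈ M) : IsMulCommutative M := by
  by_contra hMc
  have hMG : ¬IsMulCommutative (M.map K.subtype) := fun h => hMc <| by
    have := comap_injective_isMulCommutative (M.map K.subtype) K.subtype_injective
    rwa [comap_map_eq_self_of_injective K.subtype_injective] at this
  have hb : b ∈ M := by
    obtain ⟨c, hc⟩ := isConj_iff.mp hab
    rw [← mem_map_iff_mem K.subtype_injective, K.coe_subtype, ← hc]
    exact (hmh _ hMG).conj_mem _ (mem_map_of_mem _ ha) c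
  exact hM (eq_top_iff.mpr (hK ▸ (closure_le M).mpr (by simp [Set.insert_subset_iff, ha, hb])))

/-- In a finite metahamiltonian p-group, if [x, x^g] ≠ 1 then [x, x^g, x] = 1
and [x, x^g]^p = 1. -/
theorem comm_conj_relations {p : ℕ} (hp : p.Prime)
    (G : Type*) [Group G] [Finite G] (hG : IsPGroup p G)
    (hmh : ∀ H : Subgroup G, ¬IsMulCommutative H → H.Normal)
    (x g : G) (h : ⁅x, g⁻¹ * x * g⁆ ≠ 1) :
    ⁅⁅x, g⁻¹ * x * g⁆, x⁆ = 1 ∧ ⁅x, g⁻¹ * x * g⁆ ^ p = 1 := by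
  have : Fact p.Prime := ⟨hp⟩
  set y := g⁻¹ * x * g
  set K := closure ({x, y} : Set G)
  let a : K := ⟨x, subset_closure (by simp)⟩
  let b : K := ⟨y, subset_closure (by simp)⟩
  have hK : closure {a, b} = ⊤ := by
    rw [← closure_closure_coe_preimage (k := {x, y})]
    congr 1
    ext ⟨z, hz⟩
    simp [a, b]
  have hxy : IsConj x y := isConj_iff.mpr ⟨g⁻¹, by rw [inv_inv]⟩
  have hcoe : ((⁅a, b⁆ : K) : G) = ⁅x, y⁆ := map_commutatorElement K.subtype a b
  have hab : ⁅a, b⁆ ≠ 1 := fun h1 => h (by rw [← hcoe, h1]; rfl)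
  obtain ⟨h1, h2⟩ :=
    (hG.to_subgroup K).commutatorElement_commutatorElement_eq_one_and_pow_eq_one hab
      (fun M hM => isMulCommutative_of_ne_top_of_mem hmh hK hxy hM.1)
      (fun M hM => isMulCommutative_of_ne_top_of_mem hmh (Set.pair_comm a b ▸ hK) hxy.symm hM.1)
  refine ⟨by simpa [a, b, map_commutatorElement] using congrArg K.subtype h1, ?_⟩
  rw [← hcoe]
  simpa using congrArg Subtype.val h2
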